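/- Let X₁, …, X_n be independent random vectors in ℝ^p with E X_i = 0, ‖X_i‖ ≤ M almost surely for each i, and (1/n)·Σ_{i=1}^n Cov(X_i) ⪰ λ·I_p for some λ > 0 (in the positive semidefinite order). Then there exist ε₀ > 0 and c > 0, depending only on M, λ and p, such that |∏_{i=1}^n E exp(i·t'X_i/√n)| ≤ exp(−c·‖t‖²) for all t ∈ ℝ^p with ‖t‖ ≤ ε₀·√n. In particular, for every d₂ > 0 and all n ≥ 2, sup{ |∏_{i=1}^n E exp(i·t'X_i/√n)| : d₂·√(log n) ≤ ‖t‖ ≤ ε₀·√n } ≤ n^{−c·d₂²}. -/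

import Mathlib

/-!
Each factor is controlled by the second-order Taylor expansion of `exp (i x)`: a centred real
variable `Y` with `|Y| ≤ 1` satisfies `‖E exp (i Y)‖ ≤ 1 - E[Y²]/4 ≤ exp (-E[Y²]/4)`.
With `ε₀ = 1 / max M 1`, the variables `Y_i = t'X_i/√n` obey `|Y_i| ≤ ‖t‖ M/√n ≤ 1`, and
`Σ E[Y_i²]` is the quadratic form at `t` of the averaged second-moment matrix, hence at least
`λ‖t‖²`. This gives `c = λ/4`; the polynomial bound follows by inserting `‖t‖² ≥ d₂² log n`.
-/

open MeasureTheory ProbabilityTheory Matrix Finset Real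

noncomputable section

/-- Euclidean norm of a finite-dimensional real vector. -/
def vnorm {ι : Type*} [Fintype ι] (v : ι → ℝ) : ℝ := Real.sqrt (∑ i, v i ^ 2)

section

variable {ι : Type*} [Fintype ι]

lemma vnorm_sq (v : ι → ℝ) : vnorm v ^ 2 = v ⬝ᵥ v := by
  rw [vnorm, Real.sq_sqrt (by positivity)]
  simp [dotProduct, sq]

lemma abs_dotProduct_le_vnorm_mul_vnorm (t x : ι → ℝ) : |t ⬝ᵥ x| ≤ vnorm t * vnorm x := by
  rw [← Real.sqrt_sq_eq_abs, vnorm, vnorm, ← Real.sqrt_mul (by positivity)]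
  exact Real.sqrt_le_sqrt (sum_mul_sq_le_sq_mul_sq univ t x)

lemma abs_apply_le_vnorm (v : ι → ℝ) (a : ι) : |v a| ≤ vnorm v := by
  rw [← Real.sqrt_sq_eq_abs]
  exact Real.sqrt_le_sqrt (single_le_sum (fun i _ => sq_nonneg (v i)) (mem_univ a))

lemma Matrix.PosSemidef.mul_vnorm_sq_le [DecidableEq ι] {A : Matrix ι ι ℝ} {lam : ℝ}
    (h : (A - lam • 1).PosSemidef) (t : ι → ℝ) : lam * vnorm t ^ 2 ≤ t ⬝ᵥ A *ᵥ t := by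
  have hform := h.dotProduct_mulVec_nonneg t
  rw [star_trivial, sub_mulVec, dotProduct_sub, smul_mulVec, one_mulVec, dotProduct_smul,
    smul_eq_mul] at hform
  rw [vnorm_sq]
  linarith

end

open Complex in
lemma norm_cexp_I_mul_sub_taylor_le {x : ℝ} (hx : |x| ≤ 1) :
    ‖cexp (I * x) - (1 + I * x - x ^ 2 / 2)‖ ≤ 2 / 9 * x ^ 2 := by
  have hnorm : ‖I * (x : ℂ)‖ = |x| := by simp
  have hb := Complex.exp_bound (x := I * x) (hnorm ▸ hx) (n := 3) (by norm_num)
  have hsum : ∑ m ∈ range 3, (I * (x : ℂ)) ^ m / m.factorial = 1 + I * x - x ^ 2 / 2 := by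
    simp only [sum_range_succ, sum_range_zero, Nat.factorial, mul_pow, I_sq]
    push_cast
    ring
  have hcube : |x| ^ 3 ≤ x ^ 2 := by
    rw [← sq_abs x, pow_succ]
    exact mul_le_of_le_one_right (by positivity) hx
  -- `Complex.exp_bound` at order 3 has constant `4/18 = 2/9` in front of `|x|³ ≤ x²`
  rw [hsum, hnorm] at hb
  norm_num [Nat.factorial] at hb
  linarith

lemma exp_neg_mul_sq_le_rpow_neg {x c d s : ℝ} (hx : 1 ≤ x) (hc : 0 ≤ c) (hd : 0 ≤ d)
    (hs : d * √(Real.log x) ≤ s) : Real.exp (-c * s ^ 2) ≤ x ^ (-(c * d ^ 2)) := by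
  have hlog : 0 ≤ Real.log x := Real.log_nonneg hx
  have hsq : d ^ 2 * Real.log x ≤ s ^ 2 := by
    simpa [mul_pow, Real.sq_sqrt hlog] using pow_le_pow_left₀ (by positivity) hs 2
  rw [Real.rpow_def_of_pos (by linarith), Real.exp_le_exp]
  nlinarith

section

variable {Ω : Type*} [MeasurableSpace Ω] {P : Measure Ω} {ι : Type*} [Fintype ι]

lemma integrable_apply_of_vnorm_le [IsFiniteMeasure P] {Z : Ω → ι → ℝ} {M : ℝ}
    (hZ : Measurable Z) (hbd : ∀ᵐ ω ∂P, vnorm (Z ω) ≤ M) (a : ι) :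
    Integrable (fun ω => Z ω a) P :=
  .of_bound (by fun_prop) M <| by
    filter_upwards [hbd] with ω hω using (abs_apply_le_vnorm _ a).trans hω

lemma integrable_apply_mul_apply_of_vnorm_le [IsFiniteMeasure P] {Z : Ω → ι → ℝ} {M : ℝ}
    (hZ : Measurable Z) (hbd : ∀ᵐ ω ∂P, vnorm (Z ω) ≤ M) (a b : ι) :
    Integrable (fun ω => Z ω a * Z ω b) P :=
  .of_bound (by fun_prop) (M * M) <| by
    filter_upwards [hbd] with ω hω
    have ha := (abs_apply_le_vnorm _ a).trans hω
    rw [Real.norm_eq_abs, abs_mul]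
    exact mul_le_mul ha ((abs_apply_le_vnorm _ b).trans hω) (abs_nonneg _)
      ((abs_nonneg _).trans ha)

lemma integral_dotProduct_eq_zero {Z : Ω → ι → ℝ} (hZ : ∀ a, Integrable (fun ω => Z ω a) P)
    (hmean : ∀ a, ∫ ω, Z ω a ∂P = 0) (t : ι → ℝ) : ∫ ω, t ⬝ᵥ Z ω ∂P = 0 := by
  simp only [dotProduct]
  rw [integral_finsetSum _ fun a _ => (hZ a).const_mul _]
  simp [integral_const_mul, hmean]

open Complex in
lemma norm_integral_cexp_I_mul_le [IsProbabilityMeasure P] {Y : Ω → ℝ}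
    (hY : AEMeasurable Y P) (hbd : ∀ᵐ ω ∂P, |Y ω| ≤ 1) (hmean : ∫ ω, Y ω ∂P = 0) :
    ‖∫ ω, cexp (I * Y ω) ∂P‖ ≤ 1 - (∫ ω, Y ω ^ 2 ∂P) / 4 := by
  set V := ∫ ω, Y ω ^ 2 ∂P
  have hY_int : Integrable Y P := .of_bound hY.aestronglyMeasurable 1 (by simpa using hbd)
  have hbd_sq : ∀ᵐ ω ∂P, Y ω ^ 2 ≤ 1 := by
    filter_upwards [hbd] with ω hω
    rw [← sq_abs]
    exact pow_le_one₀ (abs_nonneg _) hω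
  have hY2_int : Integrable (fun ω => Y ω ^ 2) P :=
    .of_bound (hY.pow_const 2).aestronglyMeasurable 1 (by simpa using hbd_sq)
  have hV0 : 0 ≤ V := integral_nonneg fun ω => sq_nonneg (Y ω)
  have hV1 : V ≤ 1 := by simpa using integral_mono_ae hY2_int (integrable_const 1) hbd_sq
  have hexp_int : Integrable (fun ω => cexp (I * Y ω)) P :=
    .of_bound (by fun_prop) 1 (.of_forall fun ω => by simp [mul_comm I])
  have htaylor_eq : (fun ω => 1 + I * Y ω - (Y ω : ℂ) ^ 2 / 2) =
      fun ω => ((1 - Y ω ^ 2 / 2 : ℝ) : ℂ) + I * (Y ω : ℂ) := by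
    ext ω
    push_cast
    ring
  have hre_int : Integrable (fun ω => 1 - Y ω ^ 2 / 2) P :=
    (integrable_const 1).sub (hY2_int.div_const 2)
  have htaylor_int : Integrable (fun ω => 1 + I * Y ω - (Y ω : ℂ) ^ 2 / 2) P := by
    rw [htaylor_eq]
    exact hre_int.ofReal.add (hY_int.ofReal.const_mul I)
  have htaylor : ∫ ω, (1 + I * Y ω - (Y ω : ℂ) ^ 2 / 2) ∂P = ((1 - V / 2 : ℝ) : ℂ) := by
    rw [htaylor_eq, integral_add, integral_const_mul, integral_complex_ofReal,
      integral_complex_ofReal, hmean, integral_sub (integrable_const 1) (hY2_int.div_const 2),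
      integral_div]
    · simp [V]
    · exact hre_int.ofReal
    · exact hY_int.ofReal.const_mul I
  have herr : ‖∫ ω, (cexp (I * Y ω) - (1 + I * Y ω - (Y ω : ℂ) ^ 2 / 2)) ∂P‖ ≤ 2 / 9 * V := by
    rw [← integral_const_mul]
    refine norm_integral_le_of_norm_le (hY2_int.const_mul _) ?_
    filter_upwards [hbd] with ω hω using norm_cexp_I_mul_sub_taylor_le hω
  calc ‖∫ ω, cexp (I * Y ω) ∂P‖
      = ‖∫ ω, (cexp (I * Y ω) - (1 + I * Y ω - (Y ω : ℂ) ^ 2 / 2)) ∂P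
          + ((1 - V / 2 : ℝ) : ℂ)‖ := by
        rw [integral_sub hexp_int htaylor_int, htaylor, sub_add_cancel]
    _ ≤ 2 / 9 * V + (1 - V / 2) := by
        refine norm_add_le_of_le herr ?_
        rw [norm_real, Real.norm_of_nonneg (by linarith)]
    _ ≤ 1 - V / 4 := by linarith

open Complex in
lemma norm_prod_integral_cexp_I_mul_le [IsProbabilityMeasure P] {Y : ι → Ω → ℝ}
    (hY : ∀ i, AEMeasurable (Y i) P) (hbd : ∀ i, ∀ᵐ ω ∂P, |Y i ω| ≤ 1)
    (hmean : ∀ i, ∫ ω, Y i ω ∂P = 0) :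
    ‖∏ i, ∫ ω, cexp (I * Y i ω) ∂P‖ ≤ Real.exp (-(∑ i, ∫ ω, Y i ω ^ 2 ∂P) / 4) := by
  rw [norm_prod, neg_div, sum_div, ← sum_neg_distrib, Real.exp_sum]
  gcongr with i
  refine (norm_integral_cexp_I_mul_le (hY i) (hbd i) (hmean i)).trans ?_
  linarith [Real.add_one_le_exp (-((∫ ω, Y i ω ^ 2 ∂P) / 4))]

lemma integral_dotProduct_sq {Z : Ω → ι → ℝ}
    (hZ : ∀ a b, Integrable (fun ω => Z ω a * Z ω b) P) (t : ι → ℝ) :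
    ∫ ω, (t ⬝ᵥ Z ω) ^ 2 ∂P = t ⬝ᵥ (Matrix.of fun a b => ∫ ω, Z ω a * Z ω b ∂P) *ᵥ t := by
  have hsq (ω : Ω) : (t ⬝ᵥ Z ω) ^ 2 = ∑ a, ∑ b, t a * (Z ω a * Z ω b * t b) := by
    simp only [dotProduct, sq, sum_mul_sum]
    exact sum_congr rfl fun a _ => sum_congr rfl fun b _ => by ring
  simp only [hsq]
  simp only [dotProduct, mulVec, Matrix.of_apply]
  rw [integral_finsetSum _ fun a _ => integrable_finsetSum _ fun b _ =>
    ((hZ a b).mul_const _).const_mul _]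
  refine sum_congr rfl fun a _ => ?_
  rw [integral_finsetSum _ fun b _ => ((hZ a b).mul_const _).const_mul _, mul_sum]
  exact sum_congr rfl fun b _ => by rw [integral_const_mul, integral_mul_const]

lemma sum_integral_sq_dotProduct_div_sqrt {κ : Type*} [Fintype κ] {X : κ → Ω → ι → ℝ}
    (hX : ∀ i a b, Integrable (fun ω => X i ω a * X i ω b) P) (t : ι → ℝ) {s : ℝ}
    (hs : 0 ≤ s) :
    ∑ i, ∫ ω, ((t ⬝ᵥ X i ω) / √s) ^ 2 ∂P =
      t ⬝ᵥ (Matrix.of fun a b => s⁻¹ * ∑ i, ∫ ω, X i ω a * X i ω b ∂P) *ᵥ t := by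
  have hmat : (Matrix.of fun a b => s⁻¹ * ∑ i, ∫ ω, X i ω a * X i ω b ∂P) =
      s⁻¹ • ∑ i, Matrix.of fun a b => ∫ ω, X i ω a * X i ω b ∂P := by
    ext a b
    simp [Matrix.sum_apply]
  simp only [div_pow, Real.sq_sqrt hs, integral_div, hmat, smul_mulVec, dotProduct_smul,
    sum_mulVec, dotProduct_sum, ← integral_dotProduct_sq (hX _), smul_eq_mul]
  rw [← sum_div, div_eq_inv_mul]

end

theorem charFun_product_bound_general (p : ℕ) (M lam : ℝ) (hlam : 0 < lam) :
    ∃ ε₀ > (0 : ℝ), ∃ c > (0 : ℝ),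
      ∀ (n : ℕ) (Ω : Type) [MeasurableSpace Ω] (P : Measure Ω),
        IsProbabilityMeasure P →
        ∀ X : Fin n → Ω → (Fin p → ℝ),
        (∀ i, Measurable (X i)) →
        iIndepFun X P →
        (∀ i a, ∫ ω, X i ω a ∂P = 0) →
        (∀ i, ∀ᵐ ω ∂P, vnorm (X i ω) ≤ M) →
        Matrix.PosSemidef
          ((Matrix.of fun a b => (n : ℝ)⁻¹ * ∑ i, ∫ ω, X i ω a * X i ω b ∂P)
            - lam • (1 : Matrix (Fin p) (Fin p) ℝ)) →
        (∀ t : Fin p → ℝ, vnorm t ≤ ε₀ * Real.sqrt n →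
          ‖∏ i, ∫ ω, Complex.exp (Complex.I *
              (((t ⬝ᵥ X i ω) / Real.sqrt n : ℝ) : ℂ)) ∂P‖
            ≤ Real.exp (-c * vnorm t ^ 2)) ∧
        (∀ d₂ : ℝ, 0 < d₂ → 2 ≤ n → ∀ t : Fin p → ℝ,
          d₂ * Real.sqrt (Real.log n) ≤ vnorm t → vnorm t ≤ ε₀ * Real.sqrt n →
          ‖∏ i, ∫ ω, Complex.exp (Complex.I *
              (((t ⬝ᵥ X i ω) / Real.sqrt n : ℝ) : ℂ)) ∂P‖
            ≤ (n : ℝ) ^ (-(c * d₂ ^ 2))) := by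
  refine ⟨(max M 1)⁻¹, by positivity, lam / 4, by positivity, ?_⟩
  intro n Ω _ P _ X hX _ hmean hbd hpsd
  have hbound (t : Fin p → ℝ) (ht : vnorm t ≤ (max M 1)⁻¹ * √n) :
      ‖∏ i, ∫ ω, Complex.exp (Complex.I * (((t ⬝ᵥ X i ω) / √n : ℝ) : ℂ)) ∂P‖ ≤
        Real.exp (-(lam / 4) * vnorm t ^ 2) := by
    have hscale : vnorm t * max M 1 ≤ √n := by
      rwa [← le_div_iff₀ (by positivity), div_eq_inv_mul]
    have hsmall (i : Fin n) : ∀ᵐ ω ∂P, |(t ⬝ᵥ X i ω) / √n| ≤ 1 := by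
      filter_upwards [hbd i] with ω hω
      rw [abs_div, abs_of_nonneg (Real.sqrt_nonneg _)]
      refine div_le_one_of_le₀ ?_ (Real.sqrt_nonneg _)
      calc |t ⬝ᵥ X i ω| ≤ vnorm t * vnorm (X i ω) := abs_dotProduct_le_vnorm_mul_vnorm _ _
        _ ≤ vnorm t * max M 1 := by
          gcongr
          exacts [Real.sqrt_nonneg _, hω.trans (le_max_left _ _)]
        _ ≤ √n := hscale
    have hcentered (i : Fin n) : ∫ ω, (t ⬝ᵥ X i ω) / √n ∂P = 0 := by
      rw [integral_div, integral_dotProduct_eq_zero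
        (integrable_apply_of_vnorm_le (hX i) (hbd i)) (hmean i), zero_div]
    have hvar : lam * vnorm t ^ 2 ≤ ∑ i, ∫ ω, ((t ⬝ᵥ X i ω) / √n) ^ 2 ∂P := by
      rw [sum_integral_sq_dotProduct_div_sqrt
        (fun i => integrable_apply_mul_apply_of_vnorm_le (hX i) (hbd i)) t n.cast_nonneg]
      exact hpsd.mul_vnorm_sq_le t
    refine (norm_prod_integral_cexp_I_mul_le (fun i => by fun_prop) hsmall hcentered).trans ?_
    gcongr
    linarith
  refine ⟨hbound, fun d₂ hd₂ hn t hlow hup => (hbound t hup).trans ?_⟩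
  exact exp_neg_mul_sq_le_rpow_neg (by exact_mod_cast one_le_two.trans hn) (by positivity)
    hd₂.le hlow

/-- Exponential bound on products of characteristic functions of independent,
centered, bounded random vectors whose average covariance dominates λI:
|∏ E exp(i t'X_i/√n)| ≤ exp(−c‖t‖²) for ‖t‖ ≤ ε₀√n, with ε₀, c depending only
on M, λ, p; in particular the product is at most n^{−c d₂²} on
d₂√(log n) ≤ ‖t‖ ≤ ε₀√n for n ≥ 2. -/
theorem charFun_product_bound (p : ℕ) (M lam : ℝ) (hM : 0 < M) (hlam : 0 < lam) :
    ∃ ε₀ > (0 : ℝ), ∃ c > (0 : ℝ),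
      ∀ (n : ℕ) (Ω : Type) [MeasurableSpace Ω] (P : Measure Ω),
        IsProbabilityMeasure P →
        ∀ X : Fin n → Ω → (Fin p → ℝ),
        (∀ i, Measurable (X i)) →
        iIndepFun X P →
        (∀ i a, ∫ ω, X i ω a ∂P = 0) →
        (∀ i, ∀ᵐ ω ∂P, vnorm (X i ω) ≤ M) →
        Matrix.PosSemidef
          ((Matrix.of fun a b => (n : ℝ)⁻¹ * ∑ i, ∫ ω, X i ω a * X i ω b ∂P)
            - lam • (1 : Matrix (Fin p) (Fin p) ℝ)) →
        (∀ t : Fin p → ℝ, vnorm t ≤ ε₀ * Real.sqrt n →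
          ‖∏ i, ∫ ω, Complex.exp (Complex.I *
              (((t ⬝ᵥ X i ω) / Real.sqrt n : ℝ) : ℂ)) ∂P‖
            ≤ Real.exp (-c * vnorm t ^ 2)) ∧
        (∀ d₂ : ℝ, 0 < d₂ → 2 ≤ n → ∀ t : Fin p → ℝ,
          d₂ * Real.sqrt (Real.log n) ≤ vnorm t → vnorm t ≤ ε₀ * Real.sqrt n →
          ‖∏ i, ∫ ω, Complex.exp (Complex.I *
              (((t ⬝ᵥ X i ω) / Real.sqrt n : ℝ) : ℂ)) ∂P‖
            ≤ (n : ℝ) ^ (-(c * d₂ ^ 2))) :=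
  charFun_product_bound_general p M lam hlam

end
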